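/- arXiv:2305.14149 — 2 statements merged into one kernel-verified Lean document; each statement's English description precedes it below -/
import Mathlib

section
/- Abstraction soundness for families of FSCs: for a POMDP M, a finite family F_k = {F_1,…,F_m} of k-FSCs, and the MDP abstraction MDP(F_k) with state space S × N and actions {1,…,m} whose transition function under action i equals the transition function of the induced MC M^{F_i}, every F ∈ F_k satisfies P_min^{MDP(F_k)}(◇T) ≤ P^{M^F}(◇T) ≤ P_max^{MDP(F_k)}(◇T), where T is lifted to T × N. -/
open scoped ENNReal Classical

/-- `n`-step reachability probability of `T` in a Markov chain with transition matrix `Q`. -/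
noncomputable def mcReachN {St : Type*} (Q : St → St → ℝ≥0∞) (T : Set St) :
    ℕ → St → ℝ≥0∞
  | 0, s => if s ∈ T then 1 else 0
  | n + 1, s => if s ∈ T then 1 else ∑' s', Q s s' * mcReachN Q T n s'

/-- Reachability probability of `T` in a Markov chain. -/
noncomputable def mcReach {St : Type*} (Q : St → St → ℝ≥0∞) (T : Set St) (s : St) : ℝ≥0∞ :=
  ⨆ n, mcReachN Q T n s

/-- `n`-step maximal reachability probability of `T` in an MDP. -/
noncomputable def mdpMaxReachN {St A : Type*} (P : St → A → St → ℝ≥0∞) (T : Set St) :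
    ℕ → St → ℝ≥0∞
  | 0, s => if s ∈ T then 1 else 0
  | n + 1, s => if s ∈ T then 1 else ⨆ a, ∑' s', P s a s' * mdpMaxReachN P T n s'

/-- Maximal reachability probability of `T` in an MDP. -/
noncomputable def mdpMaxReach {St A : Type*} (P : St → A → St → ℝ≥0∞) (T : Set St)
    (s : St) : ℝ≥0∞ :=
  ⨆ n, mdpMaxReachN P T n s

/-- `n`-step minimal reachability probability of `T` in an MDP. -/
noncomputable def mdpMinReachN {St A : Type*} (P : St → A → St → ℝ≥0∞) (T : Set St) :
    ℕ → St → ℝ≥0∞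
  | 0, s => if s ∈ T then 1 else 0
  | n + 1, s => if s ∈ T then 1 else ⨅ a, ∑' s', P s a s' * mdpMinReachN P T n s'

/-- Minimal reachability probability of `T` in an MDP. -/
noncomputable def mdpMinReach {St A : Type*} (P : St → A → St → ℝ≥0∞) (T : Set St)
    (s : St) : ℝ≥0∞ :=
  ⨆ n, mdpMinReachN P T n s

/-- Transition matrix of the MC induced on a POMDP by an FSC `(γ, δ)`. -/
noncomputable def inducedQ {S A Z N : Type*} (P : S → A → S → ℝ≥0∞) (O : S → Z)
    (γ : N → Z → A) (δ : N → Z → Z → N) : (S × N) → (S × N) → ℝ≥0∞ :=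
  fun p q =>
    (if q.2 = δ p.2 (O p.1) (O q.1) then (1 : ℝ≥0∞) else 0) * P p.1 (γ p.2 (O p.1)) q.1

lemma minN_le_mcN {St A : Type*} (Q : St → A → St → ℝ≥0∞) (T : Set St) (a : A) :
    ∀ n s, mdpMinReachN Q T n s ≤ mcReachN (fun p q => Q p a q) T n s := by
  intro n
  induction n with
  | zero => intro s; simp [mdpMinReachN, mcReachN]
  | succ n ih =>
    intro s
    simp only [mdpMinReachN, mcReachN]
    split
    · exact le_rfl
    · exact le_trans (iInf_le _ a)
        (ENNReal.tsum_le_tsum fun s' => mul_le_mul_right (ih s') _)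

lemma mcN_le_maxN {St A : Type*} (Q : St → A → St → ℝ≥0∞) (T : Set St) (a : A) :
    ∀ n s, mcReachN (fun p q => Q p a q) T n s ≤ mdpMaxReachN Q T n s := by
  intro n
  induction n with
  | zero => intro s; simp [mdpMaxReachN, mcReachN]
  | succ n ih =>
    intro s
    simp only [mdpMaxReachN, mcReachN]
    split
    · exact le_rfl
    · exact le_trans
        (ENNReal.tsum_le_tsum fun s' => mul_le_mul_right (ih s') _)
        (le_iSup (fun a => ∑' s', Q s a s' * mdpMaxReachN Q T n s') a)

/-- abstraction soundness.  For a POMDP and a finite family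
`F_k = {F_1, …, F_m}` of `k`-FSCs (all over node set `N`), the MDP abstraction over
`S × N` with actions `{1, …, m}` whose transition under action `i` is the transition
function of the induced MC `M^{F_i}` satisfies, for every member `F_i`,
`P_min^{MDP(F_k)}(◇T) ≤ P^{M^{F_i}}(◇T) ≤ P_max^{MDP(F_k)}(◇T)`
(reachability of `T × N` from the initial state `(s0, n0)`). -/
theorem mdp_abstraction_sound
    {S A Z N : Type*} (m : ℕ) (hm : 0 < m)
    (P : S → A → S → ℝ≥0∞) (hP : ∀ s a, ∑' s', P s a s' = 1)
    (O : S → Z) (s0 : S) (n0 : N)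
    (γ : Fin m → N → Z → A) (δ : Fin m → N → Z → Z → N)
    (T : Set S) (i : Fin m) :
    mdpMinReach (fun p (j : Fin m) q => inducedQ P O (γ j) (δ j) p q)
        {p : S × N | p.1 ∈ T} (s0, n0)
      ≤ mcReach (inducedQ P O (γ i) (δ i)) {p : S × N | p.1 ∈ T} (s0, n0) ∧
    mcReach (inducedQ P O (γ i) (δ i)) {p : S × N | p.1 ∈ T} (s0, n0)
      ≤ mdpMaxReach (fun p (j : Fin m) q => inducedQ P O (γ j) (δ j) p q)
        {p : S × N | p.1 ∈ T} (s0, n0) := by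
  constructor
  · exact iSup_mono fun n => minN_le_mcN _ _ i n _
  · exact iSup_mono fun n => mcN_le_maxN _ _ i n _
end

section
/- Cut-off values from an FSC under-approximate the optimal belief value: let F be an FSC for a POMDP M with nodes N, let p_{s,n} be the probability of reaching the target set T from state (s,n) in the induced MC M^F, and for a belief b define V(b,n) = Σ_{s ∈ S_{O(b)}} b(s)·p_{s,n} and V̲(b) = max_{n ∈ N} V(b,n). Then V̲(b) ≤ P_max^{M^B}(b ⊨ ◇T^B), the maximal probability of reaching target beliefs from b in the belief MDP. -/
open scoped ENNReal Classical

/-- Probability `P(b,α,z')` of observing `z'` after taking action `a` in belief `b`. -/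
noncomputable def obsProb {S A Z : Type*} (P : S → A → S → ℝ≥0∞) (O : S → Z)
    (b : S → ℝ≥0∞) (a : A) (z' : Z) : ℝ≥0∞ :=
  ∑' s, b s * ∑' s', (if O s' = z' then P s a s' else 0)

/-- Bayesian belief update `⟦b,α,z'⟧`. -/
noncomputable def beliefUpdate {S A Z : Type*} (P : S → A → S → ℝ≥0∞) (O : S → Z)
    (b : S → ℝ≥0∞) (a : A) (z' : Z) : S → ℝ≥0∞ :=
  fun s' => if O s' = z' then (∑' s, b s * P s a s') / obsProb P O b a z' else 0

/-- A belief is a target belief iff it is supported on states with the target observation. -/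
def targetBelief {S Z : Type*} (O : S → Z) (zT : Z) (b : S → ℝ≥0∞) : Prop :=
  ∀ s, b s ≠ 0 → O s = zT

/-- `n`-step maximal reachability of target beliefs in the belief MDP (value iteration). -/
noncomputable def beliefMaxReachN {S A Z : Type*} [Fintype Z]
    (P : S → A → S → ℝ≥0∞) (O : S → Z) (zT : Z) : ℕ → (S → ℝ≥0∞) → ℝ≥0∞
  | 0, b => if targetBelief O zT b then 1 else 0
  | n + 1, b => if targetBelief O zT b then 1 else
      ⨆ a, ∑ z' : Z, obsProb P O b a z' *
        beliefMaxReachN P O zT n (beliefUpdate P O b a z')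

/-- Maximal reachability probability of target beliefs in the belief MDP. -/
noncomputable def beliefMaxReach {S A Z : Type*} [Fintype Z]
    (P : S → A → S → ℝ≥0∞) (O : S → Z) (zT : Z) (b : S → ℝ≥0∞) : ℝ≥0∞ :=
  ⨆ n, beliefMaxReachN P O zT n b

/-!
Following the controller from belief `b` in node `n` is one particular policy of the belief MDP:
under observation `z` it plays `γ n z`, and after observing `z'` the induced chain continues, with
probability `obsProb`, from the posterior `beliefUpdate` in node `δ n z z'`. So by induction on the
horizon `k`, `∑ₛ b s · p^k_{s,n}` is bounded by the `k`-th value-iteration step of the belief MDP,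
and monotone convergence passes the bound to the limit.
-/

lemma ENNReal.tsum_iSup_of_monotone {α : Type*} {f : ℕ → α → ℝ≥0∞} (hf : Monotone f) :
    ∑' a, ⨆ k, f k a = ⨆ k, ∑' a, f k a := by
  refine le_antisymm ?_ (iSup_le fun k => ENNReal.tsum_le_tsum fun a => le_iSup (f · a) k)
  rw [ENNReal.tsum_eq_iSup_sum]
  refine iSup_le fun F => ?_
  rw [ENNReal.finsetSum_iSup_of_monotone fun a _ _ h => hf h a]
  exact iSup_mono fun k => ENNReal.sum_le_tsum F

lemma ENNReal.tsum_mul_le_one {α : Type*} {b f : α → ℝ≥0∞} (hb : ∑' a, b a ≤ 1)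
    (hf : ∀ a, f a ≤ 1) : ∑' a, b a * f a ≤ 1 :=
  calc ∑' a, b a * f a ≤ ∑' a, b a := ENNReal.tsum_le_tsum fun a => mul_le_of_le_one_right' (hf a)
    _ ≤ 1 := hb

section MarkovChain

variable {St : Type*} (Q : St → St → ℝ≥0∞) (T : Set St)

lemma mcReachN_monotone (s : St) : Monotone (mcReachN Q T · s) := by
  refine monotone_nat_of_le_succ fun k => ?_
  induction k generalizing s with
  | zero => by_cases hs : s ∈ T <;> simp [mcReachN, hs]
  | succ k ih =>
    by_cases hs : s ∈ T
    · simp [mcReachN, hs]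
    · simp only [mcReachN, hs, if_false]
      exact ENNReal.tsum_le_tsum fun s' => mul_le_mul_right (ih s') _

variable {Q} in
lemma mcReachN_le_one (hQ : ∀ s, ∑' s', Q s s' ≤ 1) (k : ℕ) (s : St) :
    mcReachN Q T k s ≤ 1 := by
  induction k generalizing s with
  | zero => by_cases hs : s ∈ T <;> simp [mcReachN, hs]
  | succ k ih =>
    by_cases hs : s ∈ T
    · simp [mcReachN, hs]
    · simp only [mcReachN, hs, if_false]
      exact (ENNReal.tsum_le_tsum fun s' => mul_le_of_le_one_right' (ih s')).trans (hQ s)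

end MarkovChain

section POMDP

variable {S A Z N : Type*} (P : S → A → S → ℝ≥0∞) (O : S → Z)

lemma tsum_inducedQ_mul (γ : N → Z → A) (δ : N → Z → Z → N) (s : S) (n : N)
    (f : S × N → ℝ≥0∞) :
    ∑' q, inducedQ P O γ δ (s, n) q * f q
      = ∑' s', P s (γ n (O s)) s' * f (s', δ n (O s) (O s')) := by
  rw [ENNReal.tsum_prod (f := fun s' n' => inducedQ P O γ δ (s, n) (s', n') * f (s', n'))]
  refine tsum_congr fun s' => ?_
  rw [tsum_eq_single (δ n (O s) (O s')) fun n' hn' => by simp [inducedQ, hn']]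
  simp [inducedQ]

variable {P} in
lemma inducedQ_row_le_one (hP : ∀ s a, ∑' s', P s a s' ≤ 1) (γ : N → Z → A)
    (δ : N → Z → Z → N) (p : S × N) : ∑' q, inducedQ P O γ δ p q ≤ 1 := by
  have h := tsum_inducedQ_mul P O γ δ p.1 p.2 fun _ => 1
  simp only [mul_one] at h
  exact h.trans_le (hP _ _)

noncomputable def beliefStep (b : S → ℝ≥0∞) (a : A) (s' : S) : ℝ≥0∞ :=
  ∑' s, b s * P s a s'

variable (b : S → ℝ≥0∞) (a : A)

lemma obsProb_eq_tsum_beliefStep (z' : Z) :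
    obsProb P O b a z' = ∑' s', if O s' = z' then beliefStep P b a s' else 0 := by
  calc obsProb P O b a z'
      = ∑' s, ∑' s', b s * (if O s' = z' then P s a s' else 0) := by
        simp only [obsProb, ENNReal.tsum_mul_left]
    _ = ∑' s', ∑' s, b s * (if O s' = z' then P s a s' else 0) := ENNReal.tsum_comm
    _ = ∑' s', if O s' = z' then beliefStep P b a s' else 0 := by
        refine tsum_congr fun s' => ?_
        split_ifs <;> simp [beliefStep]

variable {P b} in
lemma obsProb_ne_top (hP : ∀ s a, ∑' s', P s a s' ≤ 1) (hb : ∑' s, b s ≤ 1) (z' : Z) :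
    obsProb P O b a z' ≠ ⊤ := by
  refine ne_top_of_le_ne_top ENNReal.one_ne_top (ENNReal.tsum_mul_le_one hb fun s => ?_)
  exact (ENNReal.tsum_le_tsum fun s' => by split_ifs <;> simp).trans (hP s a)

lemma beliefUpdate_support {z' : Z} {s' : S} (h : beliefUpdate P O b a z' s' ≠ 0) : O s' = z' := by
  by_contra hne
  simp [beliefUpdate, hne] at h

lemma tsum_beliefUpdate_le_one (z' : Z) : ∑' s', beliefUpdate P O b a z' s' ≤ 1 := by
  calc ∑' s', beliefUpdate P O b a z' s'
      = (∑' s', if O s' = z' then beliefStep P b a s' else 0) / obsProb P O b a z' := by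
        simp only [div_eq_mul_inv, ← ENNReal.tsum_mul_right]
        refine tsum_congr fun s' => ?_
        split_ifs <;> simp [beliefUpdate, beliefStep, *, div_eq_mul_inv]
    _ ≤ 1 := by rw [← obsProb_eq_tsum_beliefStep]; exact ENNReal.div_self_le_one

lemma obsProb_mul_beliefUpdate {z' : Z} (hc : obsProb P O b a z' ≠ ⊤) (s' : S) :
    obsProb P O b a z' * beliefUpdate P O b a z' s'
      = if O s' = z' then beliefStep P b a s' else 0 := by
  split_ifs with h
  · rw [beliefUpdate, if_pos h]
    refine ENNReal.mul_div_cancel' (fun h0 => ?_) (fun htop => absurd htop hc)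
    rw [obsProb_eq_tsum_beliefStep, ENNReal.tsum_eq_zero] at h0
    simpa only [h, if_true, beliefStep] using h0 s'
  · simp [beliefUpdate, h]

/-- Law of total probability for the belief update. -/
lemma tsum_beliefStep_mul_eq_sum_obsProb [Fintype Z] (hc : ∀ z', obsProb P O b a z' ≠ ⊤)
    (g : Z → S → ℝ≥0∞) :
    ∑' s', beliefStep P b a s' * g (O s') s'
      = ∑ z', obsProb P O b a z' * ∑' s', beliefUpdate P O b a z' s' * g z' s' := by
  simp_rw [← ENNReal.tsum_mul_left, ← mul_assoc, obsProb_mul_beliefUpdate P O b a (hc _)]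
  rw [← Summable.tsum_finsetSum fun _ _ => ENNReal.summable]
  refine tsum_congr fun s' => ?_
  simp [ite_mul]

lemma beliefMaxReachN_of_targetBelief [Fintype Z] {zT : Z} (h : targetBelief O zT b) (k : ℕ) :
    beliefMaxReachN (A := A) P O zT k b = 1 := by
  cases k <;> simp [beliefMaxReachN, h]

lemma not_mem_of_not_targetBelief {T : Set S} {zT z : Z} (hT : ∀ s ∈ T, O s = zT)
    (hsupp : ∀ s, b s ≠ 0 → O s = z) (htb : ¬ targetBelief O zT b) :
    ∀ s, b s ≠ 0 → s ∉ T := by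
  obtain ⟨s₀, hs₀, hne⟩ := not_forall₂.mp htb
  exact fun s hs hsT => hne ((hsupp s₀ hs₀).trans ((hsupp s hs).symm.trans (hT s hsT)))

variable (γ : N → Z → A) (δ : N → Z → Z → N) (T : Set S)

lemma tsum_mul_mcReachN_succ {z : Z} (hsupp : ∀ s, b s ≠ 0 → s ∉ T ∧ O s = z) (k : ℕ) (n : N) :
    ∑' s, b s * mcReachN (inducedQ P O γ δ) {p | p.1 ∈ T} (k + 1) (s, n)
      = ∑' s', beliefStep P b (γ n z) s' *
          mcReachN (inducedQ P O γ δ) {p | p.1 ∈ T} k (s', δ n z (O s')) := by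
  calc ∑' s, b s * mcReachN (inducedQ P O γ δ) {p | p.1 ∈ T} (k + 1) (s, n)
      = ∑' s, ∑' s', b s * (P s (γ n z) s' *
          mcReachN (inducedQ P O γ δ) {p | p.1 ∈ T} k (s', δ n z (O s'))) := by
        refine tsum_congr fun s => ?_
        by_cases hbs : b s = 0
        · simp [hbs]
        obtain ⟨hsT, hOs⟩ := hsupp s hbs
        rw [ENNReal.tsum_mul_left, mcReachN, if_neg (show (s, n) ∉ {p : S × N | p.1 ∈ T} from hsT),
          tsum_inducedQ_mul, hOs]
    _ = _ := by
        rw [ENNReal.tsum_comm]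
        simp_rw [← mul_assoc, ENNReal.tsum_mul_right]
        rfl

variable {P b} in
lemma tsum_mul_mcReachN_le_beliefMaxReachN [Fintype Z] (hP : ∀ s a, ∑' s', P s a s' ≤ 1)
    {zT : Z} (hT : ∀ s ∈ T, O s = zT) (k : ℕ) (n : N) {z : Z}
    (hsupp : ∀ s, b s ≠ 0 → O s = z) (hb : ∑' s, b s ≤ 1) :
    ∑' s, b s * mcReachN (inducedQ P O γ δ) {p | p.1 ∈ T} k (s, n)
      ≤ beliefMaxReachN (A := A) P O zT k b := by
  have target_case : ∀ k n b, targetBelief O zT b → ∑' s, b s ≤ 1 →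
      ∑' s, b s * mcReachN (inducedQ P O γ δ) {p | p.1 ∈ T} k (s, n)
        ≤ beliefMaxReachN (A := A) P O zT k b := fun k n b htb hb => by
    rw [beliefMaxReachN_of_targetBelief P O b htb]
    exact ENNReal.tsum_mul_le_one hb fun s =>
      mcReachN_le_one _ (inducedQ_row_le_one O hP γ δ) k (s, n)
  induction k generalizing n b z with
  | zero =>
    by_cases htb : targetBelief O zT b
    · exact target_case 0 n b htb hb
    have hnotT := not_mem_of_not_targetBelief O b hT hsupp htb
    rw [beliefMaxReachN, if_neg htb]
    refine (ENNReal.tsum_eq_zero.mpr fun s => ?_).le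
    by_cases hbs : b s = 0
    · simp [hbs]
    · simp [mcReachN, hnotT s hbs]
  | succ k ih =>
    by_cases htb : targetBelief O zT b
    · exact target_case (k + 1) n b htb hb
    have hnotT := not_mem_of_not_targetBelief O b hT hsupp htb
    rw [beliefMaxReachN, if_neg htb,
      tsum_mul_mcReachN_succ P O b γ δ T (fun s hs => ⟨hnotT s hs, hsupp s hs⟩),
      tsum_beliefStep_mul_eq_sum_obsProb P O b _ (obsProb_ne_top O _ hP hb)
        fun z' s' => mcReachN (inducedQ P O γ δ) {p | p.1 ∈ T} k (s', δ n z z')]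
    refine le_iSup_of_le (γ n z) (Finset.sum_le_sum fun z' _ => mul_le_mul_right ?_ _)
    exact ih _ (fun s' => beliefUpdate_support P O b _) (tsum_beliefUpdate_le_one P O b _ z')

end POMDP

theorem cutoff_underapproximates_belief_value_general
    {S A Z N : Type*} [Fintype Z]
    (P : S → A → S → ℝ≥0∞) (hP : ∀ s a, ∑' s', P s a s' = 1)
    (O : S → Z) (T : Set S) (zT : Z)
    (hT : ∀ s, s ∈ T ↔ O s = zT)
    (γ : N → Z → A) (δ : N → Z → Z → N)
    (b : S → ℝ≥0∞) (z : Z)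
    (hbsupp : ∀ s, b s ≠ 0 → O s = z) (hb : ∑' s, b s = 1) :
    (⨆ n : N, ∑' s, b s * mcReach (inducedQ P O γ δ) {p : S × N | p.1 ∈ T} (s, n))
      ≤ beliefMaxReach (A := A) P O zT b := by
  refine iSup_le fun n => ?_
  calc ∑' s, b s * mcReach (inducedQ P O γ δ) {p : S × N | p.1 ∈ T} (s, n)
      = ⨆ k, ∑' s, b s * mcReachN (inducedQ P O γ δ) {p : S × N | p.1 ∈ T} k (s, n) := by
        simp_rw [mcReach, ENNReal.mul_iSup]
        exact ENNReal.tsum_iSup_of_monotone fun k k' hk s =>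
          mul_le_mul_right (mcReachN_monotone _ _ _ hk) _
    _ ≤ beliefMaxReach (A := A) P O zT b :=
        iSup_mono fun k => tsum_mul_mcReachN_le_beliefMaxReachN O γ δ T (fun s a => (hP s a).le)
          (fun s hs => (hT s).mp hs) k n hbsupp hb.le

/-- cut-off values from an FSC under-approximate the optimal belief value:
with `p_{s,n}` the reachability probabilities of `T × N` in the induced MC `M^F`,
`V(b,n) = Σ_s b(s)·p_{s,n}` and `V̲(b) = max_n V(b,n)`, we have
`V̲(b) ≤ P_max^{M^B}(b ⊨ ◇T^B)`. -/
theorem cutoff_underapproximates_belief_value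
    {S A Z N : Type*} [Fintype Z]
    (P : S → A → S → ℝ≥0∞) (hP : ∀ s a, ∑' s', P s a s' = 1)
    (O : S → Z) (T : Set S) (zT : Z)
    (hT : ∀ s, s ∈ T ↔ O s = zT)
    (habs : ∀ s ∈ T, ∀ a s', P s a s' = if s' = s then 1 else 0)
    (γ : N → Z → A) (δ : N → Z → Z → N)
    (b : S → ℝ≥0∞) (z : Z)
    (hbsupp : ∀ s, b s ≠ 0 → O s = z) (hb : ∑' s, b s = 1) :
    (⨆ n : N, ∑' s, b s * mcReach (inducedQ P O γ δ) {p : S × N | p.1 ∈ T} (s, n))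
      ≤ beliefMaxReach (A := A) P O zT b :=
  cutoff_underapproximates_belief_value_general P hP O T zT hT γ δ b z hbsupp hb
end
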